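/- (Sufficient condition for non-convexity of ∂F_c, real case.) Assume m ≥ 3, n ≥ 2, and let c : Fin m → ℝ be such that (c·A).PosSemidef, the kernel of c·A is one-dimensional, i.e. there is x₀ ≠ 0 with (c·A).mulVec x₀ = 0 and every x with (c·A).mulVec x = 0 is a scalar multiple of x₀, and the equation (c·A).mulVec x_b = -(c·b) has a solution x_b. Define u k := x₀ ⬝ᵥ (A k).mulVec x₀ and v k := x₀ ⬝ᵥ ((A k).mulVec x_b + b k) for k : Fin m, and assume u and v are linearly independent over ℝ (LinearIndependent ℝ ![u, v]). Then ∂F_c = f '' {x_b + t • x₀ | t : ℝ}, and this set is not convex. -/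

import Mathlib

/-!
Since `c ⬝ᵥ f x` is the scalar quadratic `x ⬝ᵥ (c·A) x + 2 (c·b) ⬝ᵥ x`, whose quadratic part `c·A`
is positive semidefinite and whose critical point is `x_b`, its minimizers are `x_b + ker (c·A)`,
i.e. the line `x_b + ℝ x₀`. Along that line `f` traces the parabola `t ↦ f x_b + 2t v + t² u`;
as `u` and `v` are independent, the midpoint of the points at `t = ±1`, namely `f x_b + u`,
is not on it.
-/

open Matrix Set

theorem Set.sep_range_forall_le_eq_image {α β γ : Type*} [Preorder γ] (g : α → β) (φ : β → γ) :
    {y ∈ range g | ∀ y' ∈ range g, φ y ≤ φ y'} = g '' {x | ∀ x', φ (g x) ≤ φ (g x')} := by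
  ext y
  simp only [mem_image, forall_mem_range]
  constructor
  · rintro ⟨⟨x, rfl⟩, hx⟩
    exact ⟨x, hx, rfl⟩
  · rintro ⟨x, hx, rfl⟩
    exact ⟨mem_range_self x, hx⟩

namespace Matrix

variable {ι κ : Type*} [Fintype ι]

def quadFun (M : Matrix ι ι ℝ) (β : ι → ℝ) (x : ι → ℝ) : ℝ :=
  x ⬝ᵥ M *ᵥ x + 2 * (β ⬝ᵥ x)

def quadMap (A : κ → Matrix ι ι ℝ) (b : κ → ι → ℝ) (x : ι → ℝ) : κ → ℝ :=
  fun k ↦ quadFun (A k) (b k) x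

theorem dotProduct_quadMap [Fintype κ] (A : κ → Matrix ι ι ℝ) (b : κ → ι → ℝ) (c : κ → ℝ)
    (x : ι → ℝ) :
    c ⬝ᵥ quadMap A b x = quadFun (∑ k, c k • A k) (∑ k, c k • b k) x := by
  simp only [quadFun, sum_mulVec, smul_mulVec, dotProduct_sum, sum_dotProduct, dotProduct_smul,
    smul_dotProduct, smul_eq_mul, Finset.mul_sum, ← Finset.sum_add_distrib]
  exact Finset.sum_congr rfl fun k _ ↦ by simp only [quadMap, quadFun]; ring

theorem IsSymm.dotProduct_mulVec_comm {M : Matrix ι ι ℝ} (hM : M.IsSymm) (x y : ι → ℝ) :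
    x ⬝ᵥ M *ᵥ y = y ⬝ᵥ M *ᵥ x := by
  rw [dotProduct_mulVec, ← mulVec_transpose, hM.eq, dotProduct_comm]

theorem quadFun_add {M : Matrix ι ι ℝ} (hM : M.IsSymm) (β x h : ι → ℝ) :
    quadFun M β (x + h) = quadFun M β x + 2 * (h ⬝ᵥ (M *ᵥ x + β)) + h ⬝ᵥ M *ᵥ h := by
  simp only [quadFun, mulVec_add, dotProduct_add, add_dotProduct, hM.dotProduct_mulVec_comm x h,
    dotProduct_comm β h]
  ring

theorem quadFun_add_of_mulVec_eq_neg {M : Matrix ι ι ℝ} (hM : M.IsSymm) {β xc : ι → ℝ}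
    (hxc : M *ᵥ xc = -β) (h : ι → ℝ) :
    quadFun M β (xc + h) = quadFun M β xc + h ⬝ᵥ M *ᵥ h := by
  simp [quadFun_add hM, hxc]

theorem PosSemidef.forall_quadFun_le_iff {M : Matrix ι ι ℝ} (hM : M.PosSemidef) {β xc : ι → ℝ}
    (hxc : M *ᵥ xc = -β) (x : ι → ℝ) :
    (∀ y, quadFun M β x ≤ quadFun M β y) ↔ M *ᵥ (x - xc) = 0 := by
  have hsymm : M.IsSymm := isHermitian_iff_isSymm.mp hM.1
  have hx : quadFun M β x = quadFun M β xc + (x - xc) ⬝ᵥ M *ᵥ (x - xc) := by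
    rw [← quadFun_add_of_mulVec_eq_neg hsymm hxc, add_sub_cancel]
  have hnonneg (h : ι → ℝ) : 0 ≤ h ⬝ᵥ M *ᵥ h := by simpa using hM.dotProduct_mulVec_nonneg h
  rw [← hM.dotProduct_mulVec_zero_iff, star_trivial]
  constructor
  · intro hmin
    have hle := hmin xc
    linarith [hnonneg (x - xc)]
  · intro hzero y
    have hy := quadFun_add_of_mulVec_eq_neg hsymm hxc (y - xc)
    rw [add_sub_cancel] at hy
    linarith [hnonneg (y - xc)]

theorem quadMap_add_smul {A : κ → Matrix ι ι ℝ} (hA : ∀ k, (A k).IsSymm) (b : κ → ι → ℝ)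
    (x h : ι → ℝ) (t : ℝ) :
    quadMap A b (x + t • h) = quadMap A b x + t • (2 : ℝ) • (fun k ↦ h ⬝ᵥ (A k *ᵥ x + b k)) +
      t ^ 2 • fun k ↦ h ⬝ᵥ A k *ᵥ h := by
  ext k
  simp only [quadMap, quadFun_add (hA k), Pi.add_apply, Pi.smul_apply, smul_eq_mul, mulVec_smul,
    dotProduct_smul, smul_dotProduct]
  ring

end Matrix

theorem not_convex_range_parabola {E : Type*} [AddCommGroup E] [Module ℝ E] (p u v : E)
    (huv : LinearIndependent ℝ ![u, v]) :
    ¬ Convex ℝ (range fun t : ℝ ↦ p + t • v + t ^ 2 • u) := by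
  intro hconv
  obtain ⟨s, hs⟩ := hconv (mem_range_self (-1)) (mem_range_self 1) (by norm_num : (0 : ℝ) ≤ 1 / 2)
    (by norm_num : (0 : ℝ) ≤ 1 / 2) (by norm_num)
  have hcomb : (s ^ 2 - 1) • u + s • v = 0 := by
    simp only at hs
    linear_combination (norm := module) hs
  obtain ⟨hs2, hs0⟩ := LinearIndependent.pair_iff.mp huv _ _ hcomb
  rw [hs0] at hs2
  norm_num at hs2

theorem boundary_nonconvexity_sufficient_condition_general (n m : ℕ)
    (A : Fin m → Matrix (Fin n) (Fin n) ℝ) (hA : ∀ k, (A k)ᵀ = A k)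
    (b : Fin m → (Fin n → ℝ))
    (f : (Fin n → ℝ) → (Fin m → ℝ))
    (hf : ∀ x k, f x k = x ⬝ᵥ (A k).mulVec x + 2 * (b k ⬝ᵥ x))
    (c : Fin m → ℝ)
    (hpsd : (∑ k, c k • A k).PosSemidef)
    (x₀ : Fin n → ℝ) (hker : (∑ k, c k • A k).mulVec x₀ = 0)
    (hker1 : ∀ x : Fin n → ℝ, (∑ k, c k • A k).mulVec x = 0 → ∃ t : ℝ, x = t • x₀)
    (x_b : Fin n → ℝ) (hxb : (∑ k, c k • A k).mulVec x_b = -(∑ k, c k • b k))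
    (u v : Fin m → ℝ)
    (hu : ∀ k, u k = x₀ ⬝ᵥ (A k).mulVec x₀)
    (hv : ∀ k, v k = x₀ ⬝ᵥ ((A k).mulVec x_b + b k))
    (hindep : LinearIndependent ℝ ![u, v]) :
    {y ∈ Set.range f | ∀ y' ∈ Set.range f, c ⬝ᵥ y ≤ c ⬝ᵥ y'} =
      f '' {x : Fin n → ℝ | ∃ t : ℝ, x = x_b + t • x₀} ∧
    ¬ Convex ℝ (f '' {x : Fin n → ℝ | ∃ t : ℝ, x = x_b + t • x₀}) := by
  obtain rfl : f = quadMap A b := funext fun x ↦ funext (hf x)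
  obtain rfl : u = fun k ↦ x₀ ⬝ᵥ A k *ᵥ x₀ := funext hu
  obtain rfl : v = fun k ↦ x₀ ⬝ᵥ (A k *ᵥ x_b + b k) := funext hv
  have hminimizers : {x | ∀ x', c ⬝ᵥ quadMap A b x ≤ c ⬝ᵥ quadMap A b x'} =
      {x | ∃ t : ℝ, x = x_b + t • x₀} := by
    ext x
    simp only [mem_ofPred_eq, dotProduct_quadMap, hpsd.forall_quadFun_le_iff hxb]
    constructor
    · intro hx
      obtain ⟨t, ht⟩ := hker1 _ hx
      exact ⟨t, by rw [← ht, add_sub_cancel]⟩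
    · rintro ⟨t, rfl⟩
      simp [mulVec_smul, hker]
  have hline : {x | ∃ t : ℝ, x = x_b + t • x₀} = range fun t : ℝ ↦ x_b + t • x₀ := by
    ext x
    simp [eq_comm]
  refine ⟨by rw [sep_range_forall_le_eq_image, hminimizers], ?_⟩
  rw [hline, ← range_comp, Function.comp_def]
  simp only [quadMap_add_smul hA]
  refine not_convex_range_parabola _ _ _ ?_
  simpa using (LinearIndependent.pair_smul_smul_iff isUnit_one two_ne_zero.isUnit).mpr hindep

theorem boundary_nonconvexity_sufficient_condition (n m : ℕ)
    (hm : 3 ≤ m) (hn : 2 ≤ n)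
    (A : Fin m → Matrix (Fin n) (Fin n) ℝ) (hA : ∀ k, (A k)ᵀ = A k)
    (b : Fin m → (Fin n → ℝ))
    (f : (Fin n → ℝ) → (Fin m → ℝ))
    (hf : ∀ x k, f x k = x ⬝ᵥ (A k).mulVec x + 2 * (b k ⬝ᵥ x))
    (c : Fin m → ℝ)
    (hpsd : (∑ k, c k • A k).PosSemidef)
    (x₀ : Fin n → ℝ) (hx₀ : x₀ ≠ 0) (hker : (∑ k, c k • A k).mulVec x₀ = 0)
    (hker1 : ∀ x : Fin n → ℝ, (∑ k, c k • A k).mulVec x = 0 → ∃ t : ℝ, x = t • x₀)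
    (x_b : Fin n → ℝ) (hxb : (∑ k, c k • A k).mulVec x_b = -(∑ k, c k • b k))
    (u v : Fin m → ℝ)
    (hu : ∀ k, u k = x₀ ⬝ᵥ (A k).mulVec x₀)
    (hv : ∀ k, v k = x₀ ⬝ᵥ ((A k).mulVec x_b + b k))
    (hindep : LinearIndependent ℝ ![u, v]) :
    {y ∈ Set.range f | ∀ y' ∈ Set.range f, c ⬝ᵥ y ≤ c ⬝ᵥ y'} =
      f '' {x : Fin n → ℝ | ∃ t : ℝ, x = x_b + t • x₀} ∧
    ¬ Convex ℝ (f '' {x : Fin n → ℝ | ∃ t : ℝ, x = x_b + t • x₀}) :=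
  boundary_nonconvexity_sufficient_condition_general n m A hA b f hf c hpsd x₀ hker hker1 x_b hxb u
    v hu hv hindep
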